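/- (Frame Rule) Let A and B be predicates depending only on a set of variables V, and C a predicate depending only on a set of variables W, with V and W disjoint. If C is satisfiable and C ∧ A entails C ∧ B, then A entails B. -/

import Mathlib

/-!
Given a model θ of A and a model θ₀ of C, the valuation that agrees with θ₀ on W and with θ
elsewhere satisfies C ∧ A, hence B; since it agrees with θ on V, so does θ.
-/

/-- P depends only on the variables in V. -/
def DependsOnly {Var Val : Type*} (P : (Var → Val) → Prop) (V : Set Var) : Prop :=
  ∀ θ θ' : Var → Val, (∀ x ∈ V, θ x = θ' x) → (P θ ↔ P θ')

namespace DependsOnly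

variable {Var Val : Type*} {P : (Var → Val) → Prop} {V W : Set Var}
  (θ₀ θ : Var → Val) [DecidablePred (· ∈ W)]

theorem piecewise_iff_left (hP : DependsOnly P W) : P (W.piecewise θ₀ θ) ↔ P θ₀ :=
  hP _ _ fun _ hx => Set.piecewise_eq_of_mem W θ₀ θ hx

theorem piecewise_iff_right_of_disjoint (hP : DependsOnly P V) (hdisj : Disjoint V W) :
    P (W.piecewise θ₀ θ) ↔ P θ :=
  hP _ _ fun _ hx => Set.piecewise_eq_of_notMem W θ₀ θ (Set.disjoint_left.mp hdisj hx)

end DependsOnly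

/-- Frame Rule: if C is satisfiable, depends only on W disjoint from V,
and C ∧ A ⊨ C ∧ B with A, B depending only on V, then A ⊨ B. -/
theorem frame_rule {Var Val : Type*} (A B C : (Var → Val) → Prop)
    (V W : Set Var) (hA : DependsOnly A V) (hB : DependsOnly B V)
    (hC : DependsOnly C W) (hdisj : Disjoint V W)
    (hsat : ∃ θ, C θ)
    (h : ∀ θ, (C θ ∧ A θ) → (C θ ∧ B θ)) :
    ∀ θ, A θ → B θ := by
  intro θ hAθ
  obtain ⟨θ₀, hCθ₀⟩ := hsat
  classical
  have hCA : C (W.piecewise θ₀ θ) ∧ A (W.piecewise θ₀ θ) :=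
    ⟨(hC.piecewise_iff_left θ₀ θ).mpr hCθ₀,
      (hA.piecewise_iff_right_of_disjoint θ₀ θ hdisj).mpr hAθ⟩
  exact (hB.piecewise_iff_right_of_disjoint θ₀ θ hdisj).mp (h _ hCA).2
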